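/- arXiv:2107.10762 — 2 statements merged into one kernel-verified Lean document; each statement's English description precedes it below -/
import Mathlib

section
/- Let n ∈ ℕ, n ≥ 1, and let J̃_N(ω) = (1/(n+1)⁴) · sin⁴((n+1)ω/2)/sin⁴(ω/2). Then for all ω ∈ [−π, π] with ω ≠ 0, |J̃_N'(ω)| ≤ 3π⁴/((n+1)³|ω|⁴). -/
/-!
Write `m = n + 1`, `a = sin (ω / 2)` and `s = sin (m ω / 2)`. The quotient rule gives
`J' = 2 s³ (m a cos (m ω / 2) - s cos (ω / 2)) / (m⁴ a⁵)`, and the bracket has square at most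
`(m a)² + 1`. Together with `|s| ≤ 1` and `|s| ≤ m |a|` this yields `2 |s|³ |bracket| ≤ 3 m |a|`,
so `|J'| ≤ 3 / (m³ a⁴)`; Jordan's inequality `|ω| / π ≤ |sin (ω / 2)|` on `[-π, π]` finishes.
-/

open Real

/-- The Jackson kernel (as a function of ω, away from the singularities). -/
noncomputable def jackson (n : ℕ) (ω : ℝ) : ℝ :=
  (1 / (n + 1 : ℝ) ^ 4) * Real.sin ((n + 1) * ω / 2) ^ 4 / Real.sin (ω / 2) ^ 4

lemma abs_sin_nat_mul_le (k : ℕ) (x : ℝ) : |sin (k * x)| ≤ k * |sin x| := by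
  induction k with
  | zero => simp
  | succ k ih =>
    calc |sin (((k + 1 : ℕ) : ℝ) * x)| = |sin (k * x) * cos x + cos (k * x) * sin x| := by
          push_cast; rw [add_mul, one_mul, sin_add]
      _ ≤ |sin (k * x)| * |cos x| + |cos (k * x)| * |sin x| := by
          simpa only [abs_mul] using abs_add_le (sin (k * x) * cos x) (cos (k * x) * sin x)
      _ ≤ |sin (k * x)| * 1 + 1 * |sin x| := by
          gcongr <;> exact abs_cos_le_one _
      _ ≤ (k + 1 : ℕ) * |sin x| := by push_cast; linarith

lemma div_pi_le_abs_sin_half {x : ℝ} (hx : |x| ≤ π) : |x| / π ≤ |sin (x / 2)| := by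
  have hjordan := mul_abs_le_abs_sin (x := x / 2) (by rw [abs_div, abs_two]; linarith)
  rwa [abs_div, abs_two, div_mul_div_comm, mul_comm 2 |x|, mul_div_mul_right _ _ two_ne_zero]
    at hjordan

lemma sq_mul_sin_mul_cos_sub_le (m x y : ℝ) :
    (m * sin x * cos y - sin y * cos x) ^ 2 ≤ (m * sin x) ^ 2 + 1 := by
  -- Adding the square of `m sin x sin y + cos x cos y` gives exactly `(m sin x)² + cos² x`.
  nlinarith [sq_nonneg (m * sin x * sin y + cos x * cos y), sin_sq_add_cos_sq x,
    sin_sq_add_cos_sq y, sq_nonneg (sin x)]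

lemma two_mul_pow_three_mul_abs_le {S g t : ℝ} (hS0 : 0 ≤ S) (hS1 : S ≤ 1) (hSt : S ≤ t)
    (hg : g ^ 2 ≤ t ^ 2 + 1) : 2 * S ^ 3 * |g| ≤ 3 * t := by
  have hS6_le_sq : S ^ 6 ≤ t ^ 2 :=
    (pow_le_pow_of_le_one hS0 hS1 (by norm_num)).trans (pow_le_pow_left₀ hS0 hSt 2)
  have hS6_le_one : S ^ 6 ≤ 1 := pow_le_one₀ hS0 hS1
  apply le_of_pow_le_pow_left₀ two_ne_zero (by linarith)
  calc (2 * S ^ 3 * |g|) ^ 2 = 4 * S ^ 6 * g ^ 2 := by rw [mul_pow, mul_pow, sq_abs]; ring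
    _ ≤ 4 * S ^ 6 * (t ^ 2 + 1) := by gcongr
    _ ≤ 4 * (1 * t ^ 2 + t ^ 2) := by rw [mul_assoc, mul_add, mul_one]; gcongr
    _ ≤ (3 * t) ^ 2 := by nlinarith [sq_nonneg t]

lemma hasDerivAt_jackson (n : ℕ) {ω : ℝ} (ha : sin (ω / 2) ≠ 0) :
    HasDerivAt (jackson n)
      (2 / (n + 1 : ℝ) ^ 4 * sin ((n + 1) * ω / 2) ^ 3 *
        ((n + 1) * sin (ω / 2) * cos ((n + 1) * ω / 2) - sin ((n + 1) * ω / 2) * cos (ω / 2)) /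
        sin (ω / 2) ^ 5) ω := by
  have hnum : HasDerivAt (fun x ↦ sin ((n + 1 : ℝ) * x / 2) ^ 4)
      (4 * sin ((n + 1) * ω / 2) ^ 3 * (cos ((n + 1) * ω / 2) * ((n + 1) / 2))) ω := by
    simpa using ((((hasDerivAt_id ω).const_mul ((n : ℝ) + 1)).div_const 2).sin).fun_pow 4
  have hden : HasDerivAt (fun x ↦ sin (x / 2) ^ 4)
      (4 * sin (ω / 2) ^ 3 * (cos (ω / 2) * (1 / 2))) ω := by
    simpa using (((hasDerivAt_id ω).div_const 2).sin).fun_pow 4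
  refine ((hnum.const_mul (1 / (n + 1 : ℝ) ^ 4)).fun_div hden (pow_ne_zero 4 ha)).congr_deriv ?_
  field_simp
  ring

lemma abs_deriv_jackson_le (n : ℕ) {ω : ℝ} (ha : sin (ω / 2) ≠ 0) :
    |deriv (jackson n) ω| ≤ 3 / ((n + 1 : ℝ) ^ 3 * |sin (ω / 2)| ^ 4) := by
  set m : ℝ := n + 1
  set a := sin (ω / 2)
  set s := sin (m * ω / 2)
  set G := m * a * cos (m * ω / 2) - s * cos (ω / 2)
  have hm : 0 < m := by positivity
  have hs_le : |s| ≤ m * |a| := by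
    simpa [m, s, a, mul_div_assoc] using abs_sin_nat_mul_le (n + 1) (ω / 2)
  have hG : G ^ 2 ≤ (m * |a|) ^ 2 + 1 := by
    simpa only [mul_pow, sq_abs] using sq_mul_sin_mul_cos_sub_le m (ω / 2) (m * ω / 2)
  have hkey : 2 * |s| ^ 3 * |G| ≤ 3 * (m * |a|) :=
    two_mul_pow_three_mul_abs_le (abs_nonneg s) (abs_sin_le_one _) hs_le hG
  rw [(hasDerivAt_jackson n ha).deriv]
  calc |2 / m ^ 4 * s ^ 3 * G / a ^ 5| = 2 * |s| ^ 3 * |G| / (m ^ 4 * |a| ^ 5) := by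
        rw [abs_div, abs_mul, abs_mul, abs_div, abs_pow, abs_pow, abs_pow, abs_of_pos hm, abs_two]
        field_simp
    _ ≤ 3 * (m * |a|) / (m ^ 4 * |a| ^ 5) := by gcongr
    _ = 3 / (m ^ 3 * |a| ^ 4) := by field_simp

theorem jackson_deriv_bound_general (n : ℕ) (ω : ℝ)
    (hω : ω ∈ Set.Icc (-Real.pi) Real.pi) (hω0 : ω ≠ 0) :
    |deriv (jackson n) ω| ≤ 3 * Real.pi ^ 4 / ((n + 1 : ℝ) ^ 3 * |ω| ^ 4) := by
  have hjordan : |ω| / π ≤ |sin (ω / 2)| := div_pi_le_abs_sin_half (abs_le.mpr hω)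
  have hω_pos : 0 < |ω| / π := div_pos (abs_pos.mpr hω0) pi_pos
  calc |deriv (jackson n) ω|
      ≤ 3 / ((n + 1 : ℝ) ^ 3 * |sin (ω / 2)| ^ 4) :=
        abs_deriv_jackson_le n (abs_pos.mp (hω_pos.trans_le hjordan))
    _ ≤ 3 / ((n + 1 : ℝ) ^ 3 * (|ω| / π) ^ 4) := by gcongr
    _ = 3 * π ^ 4 / ((n + 1 : ℝ) ^ 3 * |ω| ^ 4) := by field_simp

theorem jackson_deriv_bound (n : ℕ) (hn : 1 ≤ n) (ω : ℝ)
    (hω : ω ∈ Set.Icc (-Real.pi) Real.pi) (hω0 : ω ≠ 0) :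
    |deriv (jackson n) ω| ≤ 3 * Real.pi ^ 4 / ((n + 1 : ℝ) ^ 3 * |ω| ^ 4) :=
  jackson_deriv_bound_general n ω hω hω0
end

section
/- Let n ≥ 1 and 0 < |ω| ≤ π/(4(n+1)), and let k be an integer with 1 ≤ k ≤ 2n. Then |k²cos(kω)sin(ω) − k·sin(kω)cos(ω)| / sin²(ω) ≤ k⁴|ω| / (1 + cos(ω)). -/
/-!
Write the numerator as `k * g ω` with `g t = k cos(kt) sin t - sin(kt) cos t`. Then `g 0 = 0` and
`g' t = (1 - k²) sin(kt) sin t = O(k³ t²)`, so `|g ω| ≤ k³|ω|³/3`. Since `1 - cos ω ≥ ω²/3` for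
`|ω| ≤ 1`, the numerator is at most `k⁴|ω|(1 - cos ω)`, and dividing by
`sin² ω = (1 - cos ω)(1 + cos ω)` gives the bound.
-/

open Real

lemma abs_le_of_hasDerivAt_of_abs_deriv_le_mul_sq {f f' : ℝ → ℝ} {C : ℝ}
    (hf : ∀ t, HasDerivAt f (f' t) t) (h0 : f 0 = 0) (hf' : ∀ t, |f' t| ≤ C * t ^ 2) (x : ℝ) :
    |f x| ≤ C * |x| ^ 3 / 3 := by
  wlog hx : 0 ≤ x generalizing f f' x
  · have hreflect := this (f := fun t => f (-t)) (f' := fun t => -f' (-t))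
      (fun t => by simpa [Function.comp_def] using (hf (-t)).comp t (hasDerivAt_neg t))
      (by simpa using h0) (fun t => by simpa using hf' (-t)) (-x) (by linarith)
    simpa using hreflect
  have hB (t : ℝ) : HasDerivAt (fun t => C * t ^ 3 / 3) (C * t ^ 2) t :=
    (((hasDerivAt_pow 3 t).const_mul C).div_const 3).congr_deriv (by norm_num; ring)
  have hbound := image_norm_le_of_norm_deriv_right_le_deriv_boundary (a := 0) (b := x)
    (fun t _ => (hf t).continuousAt.continuousWithinAt) (fun t _ => (hf t).hasDerivWithinAt)
    (by simp [h0]) hB (fun t _ => hf' t) ⟨hx, le_rfl⟩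
  simpa [abs_of_nonneg hx] using hbound

lemma hasDerivAt_mul_cos_mul_sin_sub_sin_mul_cos (K t : ℝ) :
    HasDerivAt (fun t => K * cos (K * t) * sin t - sin (K * t) * cos t)
      ((1 - K ^ 2) * sin (K * t) * sin t) t := by
  have hKt : HasDerivAt (fun t => K * t) K t := by simpa using (hasDerivAt_id t).const_mul K
  have h := (((hasDerivAt_cos (K * t)).comp t hKt).const_mul K |>.mul (hasDerivAt_sin t)).sub
    (((hasDerivAt_sin (K * t)).comp t hKt).mul (hasDerivAt_cos t))
  exact h.congr_deriv (by simp only [Function.comp_apply]; ring)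

lemma abs_mul_cos_mul_sin_sub_sin_mul_cos_le (K x : ℝ) :
    |K * cos (K * x) * sin x - sin (K * x) * cos x| ≤ |K * (1 - K ^ 2)| * |x| ^ 3 / 3 := by
  refine abs_le_of_hasDerivAt_of_abs_deriv_le_mul_sq
    (hasDerivAt_mul_cos_mul_sin_sub_sin_mul_cos K) (by simp) (fun t => ?_) x
  calc |(1 - K ^ 2) * sin (K * t) * sin t|
      = |1 - K ^ 2| * |sin (K * t)| * |sin t| := by rw [abs_mul, abs_mul]
    _ ≤ |1 - K ^ 2| * |K * t| * |t| := by gcongr ?_ * ?_ * ?_ <;> exact abs_sin_le_abs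
    _ = |K * (1 - K ^ 2)| * t ^ 2 := by rw [abs_mul, abs_mul, ← sq_abs t]; ring

lemma abs_natCast_sq_mul_cos_mul_sin_sub_mul_sin_mul_cos_le (k : ℕ) (x : ℝ) :
    |(k : ℝ) ^ 2 * cos (k * x) * sin x - k * sin (k * x) * cos x| ≤ (k : ℝ) ^ 4 * |x| ^ 3 / 3 := by
  have hk : (k : ℝ) * |k * (1 - (k : ℝ) ^ 2)| ≤ (k : ℝ) ^ 4 := by
    rcases Nat.eq_zero_or_pos k with rfl | hk
    · simp
    have hk1 : (1 : ℝ) ≤ k := by exact_mod_cast hk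
    rw [abs_mul, Nat.abs_cast, abs_of_nonpos (by nlinarith)]
    nlinarith
  calc |(k : ℝ) ^ 2 * cos (k * x) * sin x - k * sin (k * x) * cos x|
      = k * |k * cos (k * x) * sin x - sin (k * x) * cos x| := by
        rw [← Nat.abs_cast k, ← abs_mul, Nat.abs_cast]; ring_nf
    _ ≤ k * (|k * (1 - (k : ℝ) ^ 2)| * |x| ^ 3 / 3) := by
        gcongr; exact abs_mul_cos_mul_sin_sub_sin_mul_cos_le k x
    _ ≤ (k : ℝ) ^ 4 * |x| ^ 3 / 3 := by
        rw [← mul_div_assoc, ← mul_assoc]; gcongr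

lemma sq_div_three_le_one_sub_cos {x : ℝ} (hx : |x| ≤ 1) : x ^ 2 / 3 ≤ 1 - cos x := by
  have h := (abs_le.mp (cos_bound hx)).2
  have hx2 : x ^ 2 ≤ 1 := by rw [← sq_abs]; nlinarith [abs_nonneg x]
  rw [← sq_abs x] at h hx2 ⊢
  nlinarith [sq_nonneg (|x| ^ 2)]

lemma abs_div_sin_sq_le_div_one_add_cos {a c x : ℝ} (hc : 0 ≤ c) (ha : |a| ≤ c * (1 - cos x)) :
    |a| / sin x ^ 2 ≤ c / (1 + cos x) := by
  have hsin : sin x ^ 2 = (1 - cos x) * (1 + cos x) := by rw [sin_sq]; ring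
  rcases eq_or_ne (sin x ^ 2) 0 with hs | hs
  · rw [hs, div_zero]
    exact div_nonneg hc (by linarith [neg_one_le_cos x])
  have hsub : 0 < 1 - cos x := (sub_nonneg.2 (cos_le_one x)).lt_of_ne fun h => hs (by simp [hsin, ← h])
  have hadd : 0 < 1 + cos x := by
    refine (neg_le_iff_add_nonneg'.1 (neg_one_le_cos x)).lt_of_ne fun h => hs ?_
    simp [hsin, ← h]
  rw [hsin, div_le_div_iff₀ (mul_pos hsub hadd) hadd]
  nlinarith

theorem small_omega_ratio_estimate_general (n : ℕ) (ω : ℝ)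
    (hω : |ω| ≤ Real.pi / (4 * (n + 1))) (k : ℕ) :
    |(k : ℝ) ^ 2 * Real.cos (k * ω) * Real.sin ω - k * Real.sin (k * ω) * Real.cos ω|
        / Real.sin ω ^ 2
      ≤ (k : ℝ) ^ 4 * |ω| / (1 + Real.cos ω) := by
  have hω1 : |ω| ≤ 1 :=
    calc |ω| ≤ π / (4 * (n + 1)) := hω
      _ ≤ π / 4 := by gcongr; linarith [n.cast_nonneg (α := ℝ)]
      _ ≤ 1 := by linarith [pi_le_four]
  refine abs_div_sin_sq_le_div_one_add_cos (by positivity) ?_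
  calc _ ≤ (k : ℝ) ^ 4 * |ω| ^ 3 / 3 := abs_natCast_sq_mul_cos_mul_sin_sub_mul_sin_mul_cos_le k ω
    _ = (k : ℝ) ^ 4 * |ω| * (ω ^ 2 / 3) := by rw [← sq_abs ω]; ring
    _ ≤ (k : ℝ) ^ 4 * |ω| * (1 - cos ω) := by gcongr; exact sq_div_three_le_one_sub_cos hω1

theorem small_omega_ratio_estimate (n : ℕ) (hn : 1 ≤ n) (ω : ℝ) (hω0 : 0 < |ω|)
    (hω : |ω| ≤ Real.pi / (4 * (n + 1))) (k : ℕ) (hk1 : 1 ≤ k) (hk2 : k ≤ 2 * n) :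
    |(k : ℝ) ^ 2 * Real.cos (k * ω) * Real.sin ω - k * Real.sin (k * ω) * Real.cos ω|
        / Real.sin ω ^ 2
      ≤ (k : ℝ) ^ 4 * |ω| / (1 + Real.cos ω) :=
  small_omega_ratio_estimate_general n ω hω k
end
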